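/- arXiv:0708.0255 — 2 statements merged into one kernel-verified Lean document; each statement's English description precedes it below -/
import Mathlib

section
/- Let f, g : ℝ² → ℝ be smooth functions and F = g·f. Then at every point (x,y) where f(x,y) = 0, one has H(F)(x,y) = g(x,y)³ · H(f)(x,y), where H(φ) = φ_y(φ_xx φ_y - φ_xy φ_x) + φ_x(φ_yy φ_x - φ_xy φ_y). -/
/-- Partial derivative in the first variable. -/
noncomputable def pdX (F : ℝ → ℝ → ℝ) : ℝ → ℝ → ℝ := fun x y => deriv (fun t => F t y) x

/-- Partial derivative in the second variable. -/
noncomputable def pdY (F : ℝ → ℝ → ℝ) : ℝ → ℝ → ℝ := fun x y => deriv (fun t => F x t) y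

/-- H(F) = F_xx F_y² - 2 F_xy F_x F_y + F_yy F_x². -/
noncomputable def Hfun (F : ℝ → ℝ → ℝ) : ℝ → ℝ → ℝ := fun x y =>
  pdX (pdX F) x y * (pdY F x y) ^ 2 - 2 * pdY (pdX F) x y * pdX F x y * pdY F x y
    + pdY (pdY F) x y * (pdX F x y) ^ 2

/-- W(F) = F_xxx F_y³ - 3 F_xxy F_y² F_x + 3 F_xyy F_y F_x² - F_yyy F_x³. -/
noncomputable def Wfun (F : ℝ → ℝ → ℝ) : ℝ → ℝ → ℝ := fun x y =>
  pdX (pdX (pdX F)) x y * (pdY F x y) ^ 3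
    - 3 * pdY (pdX (pdX F)) x y * (pdY F x y) ^ 2 * pdX F x y
    + 3 * pdY (pdY (pdX F)) x y * pdY F x y * (pdX F x y) ^ 2
    - pdY (pdY (pdY F)) x y * (pdX F x y) ^ 3

lemma diffX (u : ℝ → ℝ → ℝ) (hu : ContDiff ℝ (⊤ : ℕ∞) (fun p : ℝ × ℝ => u p.1 p.2))
    (x y : ℝ) : DifferentiableAt ℝ (fun t => u t y) x :=
  by have hd := hu.differentiable (by simp); exact (hd (x, y)).comp x ((differentiableAt_fun_id (𝕜 := ℝ)).prodMk (differentiableAt_const y))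

lemma diffY (u : ℝ → ℝ → ℝ) (hu : ContDiff ℝ (⊤ : ℕ∞) (fun p : ℝ × ℝ => u p.1 p.2))
    (x y : ℝ) : DifferentiableAt ℝ (fun t => u x t) y :=
  ((hu.differentiable (by simp)) (x, y)).comp y ((differentiableAt_const x).prodMk differentiableAt_id)

lemma contDiff_pdX (u : ℝ → ℝ → ℝ) (hu : ContDiff ℝ (⊤ : ℕ∞) (fun p : ℝ × ℝ => u p.1 p.2)) :
    ContDiff ℝ (⊤ : ℕ∞) (fun p : ℝ × ℝ => pdX u p.1 p.2) := by
  have h1 : ∀ x y : ℝ, pdX u x y = fderiv ℝ (fun p : ℝ × ℝ => u p.1 p.2) (x, y) (1, 0) := by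
    intro x y
    have hF := ((hu.differentiable (by simp)) (x, y)).hasFDerivAt
    have hc : HasDerivAt (fun t : ℝ => (t, y)) ((1 : ℝ), (0 : ℝ)) x :=
      (hasDerivAt_id x).prodMk (hasDerivAt_const x y)
    exact (hF.comp_hasDerivAt x hc).deriv
  have h2 : (fun p : ℝ × ℝ => pdX u p.1 p.2)
      = fun p => fderiv ℝ (fun q : ℝ × ℝ => u q.1 q.2) p (1, 0) := by
    funext p; exact h1 p.1 p.2
  rw [h2]
  exact (hu.fderiv_right (by simp)).clm_apply contDiff_const

lemma contDiff_pdY (u : ℝ → ℝ → ℝ) (hu : ContDiff ℝ (⊤ : ℕ∞) (fun p : ℝ × ℝ => u p.1 p.2)) :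
    ContDiff ℝ (⊤ : ℕ∞) (fun p : ℝ × ℝ => pdY u p.1 p.2) := by
  have h1 : ∀ x y : ℝ, pdY u x y = fderiv ℝ (fun p : ℝ × ℝ => u p.1 p.2) (x, y) (0, 1) := by
    intro x y
    have hF := ((hu.differentiable (by simp)) (x, y)).hasFDerivAt
    have hc : HasDerivAt (fun t : ℝ => (x, t)) ((0 : ℝ), (1 : ℝ)) y :=
      (hasDerivAt_const y x).prodMk (hasDerivAt_id y)
    exact (hF.comp_hasDerivAt y hc).deriv
  have h2 : (fun p : ℝ × ℝ => pdY u p.1 p.2)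
      = fun p => fderiv ℝ (fun q : ℝ × ℝ => u q.1 q.2) p (0, 1) := by
    funext p; exact h1 p.1 p.2
  rw [h2]
  exact (hu.fderiv_right (by simp)).clm_apply contDiff_const

lemma pdX_mul (u v : ℝ → ℝ → ℝ) (hu : ContDiff ℝ (⊤ : ℕ∞) (fun p : ℝ × ℝ => u p.1 p.2))
    (hv : ContDiff ℝ (⊤ : ℕ∞) (fun p : ℝ × ℝ => v p.1 p.2)) (x y : ℝ) :
    pdX (fun a b => u a b * v a b) x y = pdX u x y * v x y + u x y * pdX v x y :=
  deriv_mul (diffX u hu x y) (diffX v hv x y)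

lemma pdY_mul (u v : ℝ → ℝ → ℝ) (hu : ContDiff ℝ (⊤ : ℕ∞) (fun p : ℝ × ℝ => u p.1 p.2))
    (hv : ContDiff ℝ (⊤ : ℕ∞) (fun p : ℝ × ℝ => v p.1 p.2)) (x y : ℝ) :
    pdY (fun a b => u a b * v a b) x y = pdY u x y * v x y + u x y * pdY v x y :=
  deriv_mul (diffY u hu x y) (diffY v hv x y)

lemma pdX_add (u v : ℝ → ℝ → ℝ) (hu : ContDiff ℝ (⊤ : ℕ∞) (fun p : ℝ × ℝ => u p.1 p.2))
    (hv : ContDiff ℝ (⊤ : ℕ∞) (fun p : ℝ × ℝ => v p.1 p.2)) (x y : ℝ) :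
    pdX (fun a b => u a b + v a b) x y = pdX u x y + pdX v x y :=
  deriv_add (diffX u hu x y) (diffX v hv x y)

lemma pdY_add (u v : ℝ → ℝ → ℝ) (hu : ContDiff ℝ (⊤ : ℕ∞) (fun p : ℝ × ℝ => u p.1 p.2))
    (hv : ContDiff ℝ (⊤ : ℕ∞) (fun p : ℝ × ℝ => v p.1 p.2)) (x y : ℝ) :
    pdY (fun a b => u a b + v a b) x y = pdY u x y + pdY v x y :=
  deriv_add (diffY u hu x y) (diffY v hv x y)

/-- If `F = g·f`, then at every zero of `f` one has `H(F) = g³·H(f)`. -/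
theorem H_of_product_on_zero_set (f g : ℝ → ℝ → ℝ)
    (hf : ContDiff ℝ (⊤ : ℕ∞) (fun p : ℝ × ℝ => f p.1 p.2))
    (hg : ContDiff ℝ (⊤ : ℕ∞) (fun p : ℝ × ℝ => g p.1 p.2))
    (x y : ℝ) (hzero : f x y = 0) :
    Hfun (fun a b => g a b * f a b) x y = (g x y) ^ 3 * Hfun f x y := by
  have hgf : ContDiff ℝ (⊤ : ℕ∞) (fun p : ℝ × ℝ => g p.1 p.2 * f p.1 p.2) := hg.mul hf
  have cgx := contDiff_pdX g hg
  have cgy := contDiff_pdY g hg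
  have cfx := contDiff_pdX f hf
  have cfy := contDiff_pdY f hf
  have eX : pdX (fun a b => g a b * f a b)
      = fun a b => pdX g a b * f a b + g a b * pdX f a b := by
    funext a b; exact pdX_mul g f hg hf a b
  have eY : pdY (fun a b => g a b * f a b)
      = fun a b => pdY g a b * f a b + g a b * pdY f a b := by
    funext a b; exact pdY_mul g f hg hf a b
  have hXX : pdX (pdX (fun a b => g a b * f a b)) x y
      = (pdX (pdX g) x y * f x y + pdX g x y * pdX f x y)
        + (pdX g x y * pdX f x y + g x y * pdX (pdX f) x y) := by
    rw [eX, pdX_add _ _ (cgx.mul hf) (hg.mul cfx),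
      pdX_mul _ _ cgx hf, pdX_mul _ _ hg cfx]
  have hXY : pdY (pdX (fun a b => g a b * f a b)) x y
      = (pdY (pdX g) x y * f x y + pdX g x y * pdY f x y)
        + (pdY g x y * pdX f x y + g x y * pdY (pdX f) x y) := by
    rw [eX, pdY_add _ _ (cgx.mul hf) (hg.mul cfx),
      pdY_mul _ _ cgx hf, pdY_mul _ _ hg cfx]
  have hYY : pdY (pdY (fun a b => g a b * f a b)) x y
      = (pdY (pdY g) x y * f x y + pdY g x y * pdY f x y)
        + (pdY g x y * pdY f x y + g x y * pdY (pdY f) x y) := by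
    rw [eY, pdY_add _ _ (cgy.mul hf) (hg.mul cfy),
      pdY_mul _ _ cgy hf, pdY_mul _ _ hg cfy]
  have hX : pdX (fun a b => g a b * f a b) x y
      = pdX g x y * f x y + g x y * pdX f x y := pdX_mul g f hg hf x y
  have hY : pdY (fun a b => g a b * f a b) x y
      = pdY g x y * f x y + g x y * pdY f x y := pdY_mul g f hg hf x y
  simp only [Hfun, hXX, hXY, hYY, hX, hY, hzero, mul_zero, zero_add, add_zero]
  ring
end

section
/- Let f : ℝ² → ℝ be smooth and suppose γ : ℝ → ℝ² is a smooth regular curve with f(γ(t)) = 0 for all t, and p = γ(0) is a non-singular point of {f = 0} (i.e., ∇f(p) ≠ 0). If p is an inflection point of the curve, meaning γ'(0) and γ''(0) are linearly dependent, then H(f)(p) = 0, where H(f) = f_xx f_y² - 2 f_xy f_x f_y + f_yy f_x². -/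
lemma derivX_aux (G : ℝ × ℝ → ℝ) (hG : Differentiable ℝ G) (x y : ℝ) :
    deriv (fun t => G (t, y)) x = fderiv ℝ G (x, y) (1, 0) := by
  have h1 : HasDerivAt (fun t : ℝ => ((t, y) : ℝ × ℝ)) ((1 : ℝ), (0 : ℝ)) x :=
    (hasDerivAt_id x).prodMk (hasDerivAt_const x y)
  exact ((hG (x, y)).hasFDerivAt.comp_hasDerivAt x h1).deriv

lemma derivY_aux (G : ℝ × ℝ → ℝ) (hG : Differentiable ℝ G) (x y : ℝ) :
    deriv (fun t => G (x, t)) y = fderiv ℝ G (x, y) (0, 1) := by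
  have h1 : HasDerivAt (fun t : ℝ => ((x, t) : ℝ × ℝ)) ((0 : ℝ), (1 : ℝ)) y :=
    (hasDerivAt_const y x).prodMk (hasDerivAt_id y)
  exact ((hG (x, y)).hasFDerivAt.comp_hasDerivAt y h1).deriv

lemma clm_expand_aux (L : ℝ × ℝ →L[ℝ] ℝ) (w : ℝ × ℝ) :
    L w = w.1 * L (1, 0) + w.2 * L (0, 1) := by
  have hw : w = w.1 • ((1 : ℝ), (0 : ℝ)) + w.2 • ((0 : ℝ), (1 : ℝ)) := by
    simp [Prod.ext_iff]
  conv_lhs => rw [hw]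
  rw [map_add, map_smul, map_smul, smul_eq_mul, smul_eq_mul]

lemma along_aux (G : ℝ × ℝ → ℝ) (hG : Differentiable ℝ G) (γ : ℝ → ℝ × ℝ)
    (hγ : Differentiable ℝ γ) (t : ℝ) :
    HasDerivAt (fun s => G (γ s)) (fderiv ℝ G (γ t) (deriv γ t)) t :=
  (hG (γ t)).hasFDerivAt.comp_hasDerivAt t (hγ t).hasDerivAt

/-- At a non-singular inflection point of the curve `{f = 0}` (where the velocity
and acceleration of a regular parametrization are linearly dependent), `H(f)` vanishes. -/
theorem H_vanishes_at_inflection (f : ℝ → ℝ → ℝ)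
    (hf : ContDiff ℝ (⊤ : ℕ∞) (fun p : ℝ × ℝ => f p.1 p.2))
    (γ : ℝ → ℝ × ℝ) (hγ : ContDiff ℝ (⊤ : ℕ∞) γ)
    (hcurve : ∀ t, f (γ t).1 (γ t).2 = 0)
    (hreg : deriv γ 0 ≠ 0)
    (hgrad : (pdX f (γ 0).1 (γ 0).2, pdY f (γ 0).1 (γ 0).2) ≠ 0)
    (hinfl : (deriv γ 0).1 * (deriv (deriv γ) 0).2
              - (deriv γ 0).2 * (deriv (deriv γ) 0).1 = 0) :
    Hfun f (γ 0).1 (γ 0).2 = 0 := by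
  classical
  set F : ℝ × ℝ → ℝ := fun q => f q.1 q.2 with hFdef
  have hFc : ContDiff ℝ (⊤ : ℕ∞) F := hf
  have hFd : Differentiable ℝ F := hFc.differentiable (by simp)
  set Φ : (ℝ × ℝ) → (ℝ × ℝ) →L[ℝ] ℝ := fderiv ℝ F with hΦdef
  have hΦc : ContDiff ℝ (⊤ : ℕ∞) Φ := hFc.fderiv_right (by simp)
  have hΦd : Differentiable ℝ Φ := hΦc.differentiable (by simp)
  have hγd : Differentiable ℝ γ := hγ.differentiable (by simp)
  have hdd : Differentiable ℝ (deriv γ) := by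
    have h2 : ContDiff ℝ (⊤ : ℕ∞) γ := hγ.of_le (by simp)
    exact ((contDiff_infty_iff_deriv.mp h2).2).differentiable (by simp)
  set G1 : ℝ × ℝ → ℝ := fun q => Φ q (1, 0) with hG1def
  set G2 : ℝ × ℝ → ℝ := fun q => Φ q (0, 1) with hG2def
  have hG1d : Differentiable ℝ G1 := hΦd.clm_apply (differentiable_const _)
  have hG2d : Differentiable ℝ G2 := hΦd.clm_apply (differentiable_const _)
  have hpdX : ∀ x y, pdX f x y = G1 (x, y) := fun x y => derivX_aux F hFd x y
  have hpdY : ∀ x y, pdY f x y = G2 (x, y) := fun x y => derivY_aux F hFd x y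
  have hpdXX : ∀ x y, pdX (pdX f) x y = fderiv ℝ G1 (x, y) (1, 0) := by
    intro x y
    have h : pdX (pdX f) x y = deriv (fun t => G1 (t, y)) x := by
      unfold pdX; congr 1; funext t; exact hpdX t y
    rw [h, derivX_aux G1 hG1d]
  have hpdYX : ∀ x y, pdY (pdX f) x y = fderiv ℝ G1 (x, y) (0, 1) := by
    intro x y
    have h : pdY (pdX f) x y = deriv (fun t => G1 (x, t)) y := by
      unfold pdY; congr 1; funext t; exact hpdX x t
    rw [h, derivY_aux G1 hG1d]
  have hpdXY : ∀ x y, pdX (pdY f) x y = fderiv ℝ G2 (x, y) (1, 0) := by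
    intro x y
    have h : pdX (pdY f) x y = deriv (fun t => G2 (t, y)) x := by
      unfold pdX; congr 1; funext t; exact hpdY t y
    rw [h, derivX_aux G2 hG2d]
  have hpdYY : ∀ x y, pdY (pdY f) x y = fderiv ℝ G2 (x, y) (0, 1) := by
    intro x y
    have h : pdY (pdY f) x y = deriv (fun t => G2 (x, t)) y := by
      unfold pdY; congr 1; funext t; exact hpdY x t
    rw [h, derivY_aux G2 hG2d]
  -- symmetry of second derivatives
  have hsymm : fderiv ℝ G2 (γ 0) (1, 0) = fderiv ℝ G1 (γ 0) (0, 1) := by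
    have hF' : ∀ y, HasFDerivAt F (Φ y) y := fun y => (hFd y).hasFDerivAt
    have hΦ' : HasFDerivAt Φ (fderiv ℝ Φ (γ 0)) (γ 0) := (hΦd (γ 0)).hasFDerivAt
    have hsec := second_derivative_symmetric hF' hΦ' ((1 : ℝ), (0 : ℝ)) ((0 : ℝ), (1 : ℝ))
    have e2 : fderiv ℝ G2 (γ 0) ((1 : ℝ), (0 : ℝ))
        = fderiv ℝ Φ (γ 0) ((1 : ℝ), (0 : ℝ)) ((0 : ℝ), (1 : ℝ)) := by
      rw [hG2def, fderiv_clm_apply (hΦd _) (differentiableAt_const _)]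
      simp
    have e1 : fderiv ℝ G1 (γ 0) ((0 : ℝ), (1 : ℝ))
        = fderiv ℝ Φ (γ 0) ((0 : ℝ), (1 : ℝ)) ((1 : ℝ), (0 : ℝ)) := by
      rw [hG1def, fderiv_clm_apply (hΦd _) (differentiableAt_const _)]
      simp
    rw [e1, e2, hsec]
  -- first derivative of the constraint
  have hzero : ∀ t, Φ (γ t) (deriv γ t) = 0 := by
    intro t
    have h := (along_aux F hFd γ hγd t).deriv
    have hc : (fun s => F (γ s)) = fun _ => (0 : ℝ) := funext fun s => hcurve s
    rw [hc] at h
    simpa using h.symm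
  have hφ : ∀ s, G1 (γ s) * (deriv γ s).1 + G2 (γ s) * (deriv γ s).2 = 0 := by
    intro s
    have h := hzero s
    rw [clm_expand_aux (Φ (γ s)) (deriv γ s)] at h
    linarith [h]
  -- second derivative of the constraint
  have hd1 : HasDerivAt (fun s => (deriv γ s).1) ((deriv (deriv γ) 0).1) 0 :=
    (ContinuousLinearMap.fst ℝ ℝ ℝ).hasFDerivAt.comp_hasDerivAt 0 (hdd 0).hasDerivAt
  have hd2 : HasDerivAt (fun s => (deriv γ s).2) ((deriv (deriv γ) 0).2) 0 :=
    (ContinuousLinearMap.snd ℝ ℝ ℝ).hasFDerivAt.comp_hasDerivAt 0 (hdd 0).hasDerivAt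
  have hsum : HasDerivAt
      (fun s => G1 (γ s) * (deriv γ s).1 + G2 (γ s) * (deriv γ s).2)
      (fderiv ℝ G1 (γ 0) (deriv γ 0) * (deriv γ 0).1 + G1 (γ 0) * (deriv (deriv γ) 0).1
        + (fderiv ℝ G2 (γ 0) (deriv γ 0) * (deriv γ 0).2
          + G2 (γ 0) * (deriv (deriv γ) 0).2)) 0 :=
    ((along_aux G1 hG1d γ hγd 0).mul hd1).add ((along_aux G2 hG2d γ hγd 0).mul hd2)
  have heq2 : fderiv ℝ G1 (γ 0) (deriv γ 0) * (deriv γ 0).1 + G1 (γ 0) * (deriv (deriv γ) 0).1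
        + (fderiv ℝ G2 (γ 0) (deriv γ 0) * (deriv γ 0).2
          + G2 (γ 0) * (deriv (deriv γ) 0).2) = 0 := by
    have h := hsum.deriv
    have hc : (fun s => G1 (γ s) * (deriv γ s).1 + G2 (γ s) * (deriv γ s).2)
        = fun _ => (0 : ℝ) := funext hφ
    rw [hc] at h
    simpa using h.symm
  -- abbreviations
  set u : ℝ := (deriv γ 0).1 with hu_def
  set v : ℝ := (deriv γ 0).2 with hv_def
  set u' : ℝ := (deriv (deriv γ) 0).1 with hu'_def
  set v' : ℝ := (deriv (deriv γ) 0).2 with hv'_def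
  set a : ℝ := G1 (γ 0) with ha_def
  set b : ℝ := G2 (γ 0) with hb_def
  set A : ℝ := fderiv ℝ G1 (γ 0) (1, 0) with hA_def
  set B : ℝ := fderiv ℝ G1 (γ 0) (0, 1) with hB_def
  set C : ℝ := fderiv ℝ G2 (γ 0) (0, 1) with hC_def
  have heta : ((γ 0).1, (γ 0).2) = γ 0 := rfl
  have eq1 : a * u + b * v = 0 := hφ 0
  have eq2 : (u * A + v * B) * u + a * u' + ((u * B + v * C) * v + b * v') = 0 := by
    have e1 : fderiv ℝ G1 (γ 0) (deriv γ 0) = u * A + v * B :=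
      clm_expand_aux (fderiv ℝ G1 (γ 0)) (deriv γ 0)
    have e2 : fderiv ℝ G2 (γ 0) (deriv γ 0) = u * B + v * C := by
      have := clm_expand_aux (fderiv ℝ G2 (γ 0)) (deriv γ 0)
      rw [hsymm] at this
      exact this
    have h := heq2
    rw [e1, e2] at h
    linarith [h]
  have hinfl' : u * v' - v * u' = 0 := hinfl
  have hab : ¬(a = 0 ∧ b = 0) := by
    intro ⟨h1, h2⟩
    apply hgrad
    rw [hpdX, hpdY, heta, ← ha_def, ← hb_def, h1, h2]
    rfl
  have huv : ¬(u = 0 ∧ v = 0) := by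
    intro ⟨h1, h2⟩
    apply hreg
    have : deriv γ 0 = (u, v) := rfl
    rw [this, h1, h2]
    rfl
  have hD : (0 : ℝ) < a ^ 2 + b ^ 2 := by
    rcases not_and_or.mp hab with h | h
    · positivity
    · positivity
  have hu' : u * (a ^ 2 + b ^ 2) = -(b * (a * v - b * u)) := by linear_combination a * eq1
  have hv' : v * (a ^ 2 + b ^ 2) = a * (a * v - b * u) := by linear_combination b * eq1
  have hw : a * v - b * u ≠ 0 := by
    intro h0
    apply huv
    constructor
    · have : u * (a ^ 2 + b ^ 2) = 0 := by rw [hu', h0]; ring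
      exact (mul_eq_zero.mp this).resolve_right hD.ne'
    · have : v * (a ^ 2 + b ^ 2) = 0 := by rw [hv', h0]; ring
      exact (mul_eq_zero.mp this).resolve_right hD.ne'
  have h3 : a * u' + b * v' = 0 := by
    have hkey : (a * v - b * u) * (a * u' + b * v') = 0 := by
      linear_combination (a * v' - b * u') * eq1 - (a ^ 2 + b ^ 2) * hinfl'
    exact (mul_eq_zero.mp hkey).resolve_left hw
  have hQ : A * u ^ 2 + 2 * B * u * v + C * v ^ 2 = 0 := by linear_combination eq2 - h3
  have hw2 : (a * v - b * u) ^ 2 * (A * b ^ 2 - 2 * B * a * b + C * a ^ 2) = 0 := by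
    linear_combination (a ^ 2 + b ^ 2) ^ 2 * hQ
      + (A * (b * (a * v - b * u) - u * (a ^ 2 + b ^ 2)) - 2 * B * v * (a ^ 2 + b ^ 2)) * hu'
      + (2 * B * b * (a * v - b * u) - C * (a * (a * v - b * u) + v * (a ^ 2 + b ^ 2))) * hv'
  have hH : A * b ^ 2 - 2 * B * a * b + C * a ^ 2 = 0 :=
    (mul_eq_zero.mp hw2).resolve_left (pow_ne_zero 2 hw)
  show Hfun f (γ 0).1 (γ 0).2 = 0
  unfold Hfun
  rw [hpdXX, hpdYX, hpdYY, hpdX, hpdY, heta, ← ha_def, ← hb_def, ← hA_def, ← hB_def, ← hC_def]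
  linarith [hH]
end
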